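/- arXiv:2402.10838 — 3 statements merged into one kernel-verified Lean document; each statement's English description precedes it below -/
import Mathlib

section
/- Let c ∈ ℂ and let C be a real number with C ≥ max(6, √|Re(c)|). Let x, y, z, t ∈ ℂ satisfy P(x,y,z,t) = 2·Re(c), and set z' = z + conj(x·t) − x·y. If |x| ≥ C, |y| ≥ C, |t| > |z| and |z'| > |z|, then |z'| > |x|·|t|·(C−4)/(2C). -/
/-- The expression `P(x,y,z,t)` from the trace relation. -/
noncomputable def Pfun (x y z t : ℂ) : ℝ :=
  ‖x‖ ^ 2 * ‖y‖ ^ 2 + ‖x‖ ^ 2 + ‖y‖ ^ 2 +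
    ‖z‖ ^ 2 + ‖t‖ ^ 2 - 2 * (x * y * (starRingEnd ℂ) z).re -
    2 * ((starRingEnd ℂ) x * y * t).re - 3

/-!
Bounding the real parts in `P` by norms, the relation `P = 2 Re c` with `|x|, |y| ≥ C` leaves
`m² + |z|² + |t|² ≤ 2m(|z| + |t|) + 3` for `m = |x||y| ≥ 36`, which is impossible unless
`m < 4|t|`. The triangle inequality in `conj(xt) = z' - z + xy` then gives
`|x||t| < 2|z'| + 4|t|`, and `(|x| - 4)/2 ≥ |x|(C - 4)/(2C)` because `|x| ≥ C`.
-/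

theorem le_Pfun (x y z t : ℂ) :
    (‖x‖ * ‖y‖) ^ 2 + ‖x‖ ^ 2 + ‖y‖ ^ 2 + ‖z‖ ^ 2 + ‖t‖ ^ 2
      - 2 * (‖x‖ * ‖y‖) * (‖z‖ + ‖t‖) - 3 ≤ Pfun x y z t := by
  have hz : (x * y * (starRingEnd ℂ) z).re ≤ ‖x‖ * ‖y‖ * ‖z‖ := by
    simpa using Complex.re_le_norm (x * y * (starRingEnd ℂ) z)
  have ht : ((starRingEnd ℂ) x * y * t).re ≤ ‖x‖ * ‖y‖ * ‖t‖ := by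
    simpa using Complex.re_le_norm ((starRingEnd ℂ) x * y * t)
  unfold Pfun
  nlinarith

/-- On `w ≤ m / 4` the quadratic `w ^ 2 - 2 * m * w` is at least `-7 * m ^ 2 / 16`, so the
left-hand side of `h` is at least `m ^ 2 / 8`. -/
theorem lt_four_mul_of_sq_add_sq_add_sq_le {m s u : ℝ} (hm₀ : 0 ≤ m) (hm : 24 < m ^ 2)
    (hsu : s ≤ u) (h : m ^ 2 + s ^ 2 + u ^ 2 ≤ 2 * m * (s + u) + 3) : m < 4 * u := by
  by_contra! hu
  nlinarith [mul_nonneg (by linarith : 0 ≤ m - 4 * s) (by linarith : 0 ≤ 7 * m - 4 * s),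
    mul_nonneg (by linarith : 0 ≤ m - 4 * u) (by linarith : 0 ≤ 7 * m - 4 * u)]

theorem norm_mul_lt_four_mul_norm_of_Pfun_eq {c : ℂ} {C : ℝ} (hC : max 6 √|c.re| ≤ C)
    {x y z t : ℂ} (hP : Pfun x y z t = 2 * c.re) (hx : C ≤ ‖x‖) (hy : C ≤ ‖y‖)
    (hzt : ‖z‖ ≤ ‖t‖) : ‖x‖ * ‖y‖ < 4 * ‖t‖ := by
  have hC₆ : 6 ≤ C := le_of_max_le_left hC
  have hc : c.re ≤ C ^ 2 :=
    (le_abs_self _).trans ((Real.sqrt_le_left (by linarith)).1 (le_of_max_le_right hC))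
  have hxy : C * C ≤ ‖x‖ * ‖y‖ := mul_le_mul hx hy (by linarith) (norm_nonneg _)
  have h36 : 36 ≤ ‖x‖ * ‖y‖ := by nlinarith
  refine lt_four_mul_of_sq_add_sq_add_sq_le (by positivity) (by nlinarith) hzt ?_
  nlinarith [le_Pfun x y z t]

theorem norm_mul_norm_le_norm_add_conj_mul_sub_mul (x y z t : ℂ) :
    ‖x‖ * ‖t‖ ≤ ‖z + (starRingEnd ℂ) (x * t) - x * y‖ + ‖z‖ + ‖x‖ * ‖y‖ := by
  calc ‖x‖ * ‖t‖ = ‖(z + (starRingEnd ℂ) (x * t) - x * y) - z + x * y‖ := by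
        rw [show (z + (starRingEnd ℂ) (x * t) - x * y) - z + x * y = (starRingEnd ℂ) (x * t) by
          ring]
        simp
    _ ≤ ‖z + (starRingEnd ℂ) (x * t) - x * y‖ + ‖z‖ + ‖x‖ * ‖y‖ := by
      grw [norm_add_le, norm_sub_le, norm_mul]

theorem lower_growth_lemma (c : ℂ) (C : ℝ) (hC : max 6 (Real.sqrt |c.re|) ≤ C)
    (x y z t z' : ℂ) (hP : Pfun x y z t = 2 * c.re)
    (hz' : z' = z + (starRingEnd ℂ) (x * t) - x * y)
    (hx : C ≤ ‖x‖) (hy : C ≤ ‖y‖)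
    (htz : ‖z‖ < ‖t‖)
    (hz'z : ‖z‖ < ‖z'‖) :
    ‖x‖ * ‖t‖ * ((C - 4) / (2 * C)) < ‖z'‖ := by
  have hC₀ : 0 < C := by linarith [le_of_max_le_left hC]
  have hxy := norm_mul_lt_four_mul_norm_of_Pfun_eq hC hP hx hy htz.le
  have htri : ‖x‖ * ‖t‖ ≤ ‖z'‖ + ‖z‖ + ‖x‖ * ‖y‖ :=
    hz' ▸ norm_mul_norm_le_norm_add_conj_mul_sub_mul x y z t
  calc ‖x‖ * ‖t‖ * ((C - 4) / (2 * C)) ≤ ‖t‖ * (‖x‖ - 4) / 2 := by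
        rw [mul_div_assoc', div_le_div_iff₀ (by positivity) two_pos]
        nlinarith [mul_le_mul_of_nonneg_right hx (norm_nonneg t)]
    _ < ‖z'‖ := by linarith
end

section
/- For every c ∈ ℂ there exists a real constant D > 0, depending only on c, with the following property. Let A, B ∈ SU(2,1) satisfy tr(A·B·A⁻¹·B⁻¹) = c and f(tr(A)) > 0, and define u : ℤ → ℂ by u(n) = tr(Aⁿ · B) (integer powers taken in the group SU(2,1)). If there do NOT exist real numbers k > 0, a > 1 and N ∈ ℕ such that |u(n)| ≥ k·a^|n| for every integer n with |n| ≥ N, then the set {n ∈ ℤ : |u(n)| < D} is infinite. -/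
/-!
The characteristic polynomial of `A ∈ SU(2,1)` with `t = tr A` is `z³ - t z² + t̄ z - 1`; its
discriminant is `f(t)`, and its roots are permuted by `z ↦ 1 / z̄`. Hence `f(t) > 0` forces
eigenvalues `a, b, c` with `|a| > 1 = |b| > |c| = 1 / |a|`. Diagonalising `A` gives
`tr (Aⁿ B) = α aⁿ + β bⁿ + γ cⁿ`, and in the eigenbasis the form `J` becomes antidiagonal; since
`B` preserves it, `α = 0` or `γ = 0` forces `|β| = 1`. If `α ≠ 0 ≠ γ` the sequence grows
exponentially in both directions; otherwise `|tr (Aⁿ B)| < 2` for all large `n` in one direction,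
so `D = 2` works for every `c`.
-/

open Matrix

/-- The matrix `J = diag(1,1,-1)`. -/
def Jmat : Matrix (Fin 3) (Fin 3) ℂ := Matrix.diagonal ![1, 1, -1]

/-- `A ∈ SU(2,1)`: `det A = 1` and `Aᴴ J A = J` (equivalently `A⁻¹ = J Aᴴ J`). -/
def IsSU21 (A : Matrix (Fin 3) (Fin 3) ℂ) : Prop :=
  A.det = 1 ∧ Aᴴ * Jmat * A = Jmat

/-- The function `f(t) = |t|⁴ − 8 Re(t³) + 18 |t|² − 27`. -/
noncomputable def fdisc (t : ℂ) : ℝ :=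
  ‖t‖ ^ 4 - 8 * (t ^ 3).re + 18 * ‖t‖ ^ 2 - 27

open ComplexConjugate Filter

/-- The characteristic polynomial `det (z • 1 - A)` of any `A ∈ SU(2,1)` with `tr A = t`. -/
def charCubic (t z : ℂ) : ℂ := z ^ 3 - t * z ^ 2 + conj t * z - 1

section Cubic

open Polynomial in
theorem Complex.exists_cubic_eq_mul (b c d : ℂ) :
    ∃ p q r : ℂ, ∀ z, z ^ 3 + b * z ^ 2 + c * z + d = (z - p) * (z - q) * (z - r) := by
  set P : ℂ[X] := X ^ 3 + C b * X ^ 2 + C c * X + C d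
  have hdeg : P.natDegree = 3 := by unfold P; compute_degree!
  have hmonic : P.Monic := by unfold P; monicity!
  have hsplit : P.Splits := IsAlgClosed.splits P
  obtain ⟨p, q, r, hroots⟩ := Multiset.card_eq_three.mp
    (hdeg ▸ splits_iff_card_roots.mp hsplit)
  refine ⟨p, q, r, fun z => ?_⟩
  have := congrArg (eval z) (hsplit.eq_prod_roots_of_monic hmonic)
  simpa [P, hroots, mul_assoc] using this

variable {t p q r : ℂ}

theorem exists_charCubic_eq_mul (t : ℂ) :
    ∃ p q r : ℂ, ∀ z, charCubic t z = (z - p) * (z - q) * (z - r) := by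
  obtain ⟨p, q, r, h⟩ := Complex.exists_cubic_eq_mul (-t) (conj t) (-1)
  exact ⟨p, q, r, fun z => by rw [← h]; unfold charCubic; ring⟩

theorem vieta_of_charCubic_eq_mul (h : ∀ z, charCubic t z = (z - p) * (z - q) * (z - r)) :
    p + q + r = t ∧ p * q + q * r + r * p = conj t ∧ p * q * r = 1 := by
  have h₀ := h 0
  have h₁ := h 1
  have h₂ := h (-1)
  simp only [charCubic] at h₀ h₁ h₂
  exact ⟨by linear_combination (h₁ + h₂) / 2 - h₀, by linear_combination (h₂ - h₁) / 2,
    by linear_combination h₀⟩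

theorem charCubic_conj_inv {x : ℂ} (hx : charCubic t x = 0) : charCubic t (conj x)⁻¹ = 0 := by
  have hx₀ : conj x ≠ 0 := by
    rintro h
    rw [map_eq_zero] at h
    simp [charCubic, h] at hx
  have hconj : conj x ^ 3 - conj t * conj x ^ 2 + t * conj x - 1 = 0 := by
    simpa [charCubic] using congrArg conj hx
  unfold charCubic
  field_simp
  linear_combination -hconj

theorem ofReal_fdisc_eq_sq (h : ∀ z, charCubic t z = (z - p) * (z - q) * (z - r)) :
    (fdisc t : ℂ) = ((p - q) * (q - r) * (r - p)) ^ 2 := by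
  obtain ⟨e₁, e₂, e₃⟩ := vieta_of_charCubic_eq_mul h
  have hnorm : (‖t‖ : ℂ) ^ 2 = t * conj t := (Complex.mul_conj' t).symm
  have hre : (((t ^ 3).re : ℝ) : ℂ) = (t ^ 3 + conj t ^ 3) / 2 := by
    rw [← map_pow, Complex.add_conj]; push_cast; ring
  unfold fdisc
  push_cast
  rw [show (‖t‖ : ℂ) ^ 4 = ((‖t‖ : ℂ) ^ 2) ^ 2 by ring, hnorm, hre, ← e₂, ← e₁]
  linear_combination (4 * (p + q + r) ^ 3 - 18 * (p + q + r) * (p * q + q * r + r * p)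
    + 27 * (1 + p * q * r)) * e₃

theorem fdisc_nonpos_of_norm_eq_one (h : ∀ z, charCubic t z = (z - p) * (z - q) * (z - r))
    (hp : ‖p‖ = 1) (hq : ‖q‖ = 1) (hr : ‖r‖ = 1) : fdisc t ≤ 0 := by
  obtain ⟨-, -, hpqr⟩ := vieta_of_charCubic_eq_mul h
  set δ := (p - q) * (q - r) * (r - p)
  have hp₀ : p ≠ 0 := norm_ne_zero_iff.mp (by simp [hp])
  have hq₀ : q ≠ 0 := norm_ne_zero_iff.mp (by simp [hq])
  have hr₀ : r ≠ 0 := norm_ne_zero_iff.mp (by simp [hr])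
  -- on the unit circle `conj = inv`, and inverting the roots reverses the sign of `δ`
  have hδ : conj δ = -δ := by
    simp only [δ, map_mul, map_sub, ← Complex.inv_eq_conj hp, ← Complex.inv_eq_conj hq,
      ← Complex.inv_eq_conj hr]
    field_simp
    linear_combination (p - q) * (q - r) * (r - p) * (p * q * r + 1) * hpqr
  have hre : δ.re = 0 := by
    have := congrArg Complex.re hδ
    simp only [Complex.conj_re, Complex.neg_re] at this
    linarith
  have := congrArg Complex.re (ofReal_fdisc_eq_sq h)
  rw [Complex.ofReal_re, sq, Complex.mul_re, hre] at this
  nlinarith [sq_nonneg δ.im]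

theorem charCubic_ne_zero_of_eq_zero {x : ℂ} (hx : charCubic t x = 0) : x ≠ 0 := by
  rintro rfl
  simp [charCubic] at hx

theorem exists_charCubic_root_one_lt_norm (ht : 0 < fdisc t) :
    ∃ x, charCubic t x = 0 ∧ 1 < ‖x‖ := by
  obtain ⟨p, q, r, h⟩ := exists_charCubic_eq_mul t
  by_contra! hle
  have hunit : ∀ x, charCubic t x = 0 → ‖x‖ = 1 := fun x hx => by
    have hinv := hle _ (charCubic_conj_inv hx)
    rw [norm_inv, Complex.norm_conj,
      inv_le_one₀ (norm_pos_iff.mpr (charCubic_ne_zero_of_eq_zero hx))] at hinv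
    exact le_antisymm (hle x hx) hinv
  exact ht.not_ge (fdisc_nonpos_of_norm_eq_one h (hunit p (by simp [h]))
    (hunit q (by simp [h])) (hunit r (by simp [h])))

theorem charCubic_third_root {x y : ℂ} (hx : charCubic t x = 0) (hy : charCubic t y = 0)
    (hxy : x ≠ y) : charCubic t (t - x - y) = 0 ∧ x * y * (t - x - y) = 1 := by
  set m := t - x - y
  set e₁ := conj t - x * y - (x + y) * m
  set e₀ := x * y * m - 1
  -- `charCubic t z - (z - x) (z - y) (z - m)` is affine in `z` and vanishes at `x ≠ y`
  have hrem : ∀ z, charCubic t z = (z - x) * (z - y) * (z - m) + (e₁ * z + e₀) := by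
    intro z; simp only [charCubic, e₁, e₀, m]; ring
  rw [hrem] at hx hy ⊢
  have he₁ : e₁ = 0 := by
    have : e₁ * (x - y) = 0 := by linear_combination hx - hy
    exact (mul_eq_zero.mp this).resolve_right (sub_ne_zero.mpr hxy)
  have he₀ : e₀ = 0 := by linear_combination hx - x * he₁
  exact ⟨by rw [he₁, he₀]; ring, by linear_combination he₀⟩

theorem exists_charCubic_roots_of_fdisc_pos (ht : 0 < fdisc t) :
    ∃ a b c, charCubic t a = 0 ∧ charCubic t b = 0 ∧ charCubic t c = 0 ∧
      1 < ‖a‖ ∧ ‖b‖ = 1 ∧ ‖c‖ = ‖a‖⁻¹ := by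
  obtain ⟨a, ha, ha₁⟩ := exists_charCubic_root_one_lt_norm ht
  have hc : ‖(conj a)⁻¹‖ = ‖a‖⁻¹ := by rw [norm_inv, Complex.norm_conj]
  have hac : a ≠ (conj a)⁻¹ := fun h => by
    have := congrArg norm h
    rw [hc] at this
    exact (inv_lt_one_of_one_lt₀ ha₁).not_ge (this ▸ ha₁.le)
  obtain ⟨hb, habc⟩ := charCubic_third_root ha (charCubic_conj_inv ha) hac
  refine ⟨a, _, _, ha, hb, charCubic_conj_inv ha, ha₁, ?_, hc⟩
  have := congrArg norm habc
  rw [norm_mul, norm_mul, hc, mul_inv_cancel₀ (by positivity), one_mul, norm_one] at this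
  exact this

end Cubic

namespace Matrix

variable {ι K : Type*} [Fintype ι] [DecidableEq ι] [Field K]

theorem exists_isUnit_mul_diagonal_of_injective (A : Matrix ι ι K) (d : ι → K)
    (hd : Function.Injective d) (h : ∀ i, (d i • 1 - A).det = 0) :
    ∃ Q : Matrix ι ι K, IsUnit Q ∧ A * Q = Q * diagonal d := by
  have hev : ∀ i, ∃ v ≠ 0, A *ᵥ v = d i • v := fun i => by
    obtain ⟨v, hv, hAv⟩ := exists_mulVec_eq_zero_iff.mpr (h i)
    refine ⟨v, hv, ?_⟩
    rw [sub_mulVec, smul_mulVec, one_mulVec, sub_eq_zero] at hAv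
    exact hAv.symm
  choose v hv₀ hAv using hev
  refine ⟨of fun k i => v i k, linearIndependent_cols_iff_isUnit.mp ?_, ?_⟩
  · refine Module.End.eigenvectors_linearIndependent' (toLin' A) d hd v fun i => ?_
    exact Module.End.hasEigenvector_iff.mpr ⟨Module.End.mem_eigenspace_iff.mpr (hAv i), hv₀ i⟩
  · ext k i
    rw [mul_diagonal]
    simpa [mul_apply, mulVec, dotProduct, mul_comm] using congrFun (hAv i) k

theorem diagonal_zpow (d : ι → K) (hd : ∀ i, d i ≠ 0) (n : ℤ) :
    diagonal d ^ n = diagonal fun i => d i ^ n := by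
  have hinv : (diagonal d)⁻¹ = diagonal fun i => (d i)⁻¹ :=
    inv_eq_left_inv (by simp [diagonal_mul_diagonal, inv_mul_cancel₀ (hd _)])
  rcases Int.eq_nat_or_neg n with ⟨m, rfl | rfl⟩
  · simp [diagonal_pow]
  · rw [zpow_neg_natCast, ← inv_pow', hinv, diagonal_pow]
    simp [Pi.pow_def, inv_pow]

theorem trace_zpow_mul_of_mul_eq_mul_diagonal {A Q : Matrix ι ι K} {d : ι → K}
    (hQ : IsUnit Q) (hd : ∀ i, d i ≠ 0) (hAQ : A * Q = Q * diagonal d) (B : Matrix ι ι K)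
    (n : ℤ) : (A ^ n * B).trace = ∑ i, d i ^ n * (Q⁻¹ * B * Q) i i := by
  have hQd : IsUnit Q.det := (isUnit_iff_isUnit_det Q).mp hQ
  have hDd : IsUnit (diagonal d).det := by
    rw [det_diagonal]; exact (Finset.prod_ne_zero_iff.mpr fun i _ => hd i).isUnit
  have hAd : IsUnit A.det := by
    have := congrArg det hAQ
    rw [det_mul, det_mul, mul_comm] at this
    rwa [mul_left_cancel₀ hQd.ne_zero this]
  have hpow : Q * diagonal d ^ n = A ^ n * Q :=
    SemiconjBy.zpow_right hDd hAd hAQ.symm n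
  have hA : A ^ n = Q * diagonal d ^ n * Q⁻¹ := by
    rw [hpow, Matrix.mul_assoc, mul_nonsing_inv Q hQd, Matrix.mul_one]
  rw [hA, diagonal_zpow d hd, Matrix.mul_assoc, Matrix.mul_assoc, trace_mul_comm,
    Matrix.mul_assoc]
  simp [trace, diagonal_mul]

theorem conjTranspose_mul_mul_of_conj [StarRing K] {J M Q : Matrix ι ι K} (hQ : IsUnit Q)
    (hM : Mᴴ * J * M = J) :
    (Q⁻¹ * M * Q)ᴴ * (Qᴴ * J * Q) * (Q⁻¹ * M * Q) = Qᴴ * J * Q := by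
  have hQQ : Q * Q⁻¹ = 1 := mul_nonsing_inv Q ((isUnit_iff_isUnit_det Q).mp hQ)
  have hQQ' : (Q⁻¹)ᴴ * Qᴴ = 1 := by rw [← conjTranspose_mul, hQQ, conjTranspose_one]
  calc (Q⁻¹ * M * Q)ᴴ * (Qᴴ * J * Q) * (Q⁻¹ * M * Q)
      = Qᴴ * (Mᴴ * ((Q⁻¹)ᴴ * Qᴴ) * J * (Q * Q⁻¹) * M) * Q := by
        simp only [conjTranspose_mul, Matrix.mul_assoc]
    _ = Qᴴ * J * Q := by rw [hQQ', hQQ, Matrix.mul_one, Matrix.mul_one, hM, Matrix.mul_assoc]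

theorem det_smul_one_sub_fin_three {R : Type*} [CommRing R] (A : Matrix (Fin 3) (Fin 3) R)
    (z : R) : (z • 1 - A).det = z ^ 3 - A.trace * z ^ 2 + A.adjugate.trace * z - A.det := by
  simp [det_fin_three, adjugate_fin_three, trace_fin_three]
  ring

theorem apply_eq_zero_of_diagonal_preserves {H : Matrix ι ι ℂ} {d : ι → ℂ}
    (h : (diagonal d)ᴴ * H * diagonal d = H) {i j : ι} (hij : ‖d i‖ * ‖d j‖ ≠ 1) :
    H i j = 0 := by
  have hij' : conj (d i) * H i j * d j = H i j := by
    simpa [diagonal_conjTranspose, diagonal_mul, mul_diagonal] using congrFun₂ h i j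
  by_contra hH
  apply hij
  have : conj (d i) * d j = 1 := by
    apply mul_right_cancel₀ hH
    linear_combination hij'
  simpa using congrArg norm this

theorem eq_antidiagonal_of_diagonal_preserves {H : Matrix (Fin 3) (Fin 3) ℂ} {a b c : ℂ}
    (ha : 1 < ‖a‖) (hb : ‖b‖ = 1) (hc : ‖c‖ = ‖a‖⁻¹)
    (hH : (diagonal ![a, b, c])ᴴ * H * diagonal ![a, b, c] = H) (hdet : H.det ≠ 0) :
    H = !![0, 0, H 0 2; 0, H 1 1, 0; H 2 0, 0, 0] ∧ H 0 2 ≠ 0 ∧ H 1 1 ≠ 0 ∧ H 2 0 ≠ 0 := by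
  have hc₁ : ‖c‖ < 1 := hc ▸ inv_lt_one_of_one_lt₀ ha
  have hzero : ∀ i j, ‖![a, b, c] i‖ * ‖![a, b, c] j‖ ≠ 1 → H i j = 0 := fun i j =>
    apply_eq_zero_of_diagonal_preserves hH
  have h₀₀ := hzero 0 0 (by simp; nlinarith)
  have h₀₁ := hzero 0 1 (by simp [hb]; linarith)
  have h₁₀ := hzero 1 0 (by simp [hb]; linarith)
  have h₁₂ := hzero 1 2 (by simp [hb]; linarith)
  have h₂₁ := hzero 2 1 (by simp [hb]; linarith)
  have h₂₂ := hzero 2 2 (by simp; nlinarith [norm_nonneg c])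
  have hH' : H = !![0, 0, H 0 2; 0, H 1 1, 0; H 2 0, 0, 0] := by
    conv_lhs => rw [eta_fin_three H]
    rw [h₀₀, h₀₁, h₁₀, h₁₂, h₂₁, h₂₂]
  rw [hH', det_fin_three] at hdet
  simp only [of_apply, cons_val', cons_val_zero, cons_val_one, cons_val_two, empty_val',
    cons_val_fin_one, head_cons, tail_cons] at hdet
  refine ⟨hH', ?_, ?_, ?_⟩ <;> rintro h <;> simp [h] at hdet

variable {M : Matrix (Fin 3) (Fin 3) ℂ} {p q r : ℂ}

theorem norm_apply_one_one_eq_one_of_preserves_antidiagonal (hp : p ≠ 0) (hq : q ≠ 0)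
    (hM : Mᴴ * !![0, 0, p; 0, q, 0; r, 0, 0] * M = !![0, 0, p; 0, q, 0; r, 0, 0])
    (h : M 0 0 = 0) : ‖M 1 1‖ = 1 := by
  have e : ∀ i j, conj (M 2 i) * r * M 0 j + conj (M 1 i) * q * M 1 j + conj (M 0 i) * p * M 2 j
      = !![0, 0, p; 0, q, 0; r, 0, 0] i j := fun i j => by
    simpa [mul_apply, Fin.sum_univ_three] using congrFun₂ hM i j
  have e₀₀ := e 0 0
  have e₀₁ := e 0 1
  have e₀₂ := e 0 2
  have e₁₁ := e 1 1
  simp only [h, map_zero, zero_mul, add_zero, of_apply, cons_val', cons_val_zero, cons_val_one,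
    cons_val_two, empty_val', cons_val_fin_one, head_cons, tail_cons] at e₀₀ e₀₁ e₀₂ e₁₁
  have h₁₀ : M 1 0 = 0 := by
    have : q * (‖M 1 0‖ ^ 2 : ℂ) = 0 := by rw [← Complex.conj_mul']; linear_combination e₀₀
    simpa [hq] using this
  have hr : conj (M 2 0) * r ≠ 0 := by
    rintro h'
    apply hp
    rw [← e₀₂, h', h₁₀, map_zero]
    ring
  have h₀₁ : M 0 1 = 0 := by
    have : conj (M 2 0) * r * M 0 1 = 0 := by rw [h₁₀, map_zero] at e₀₁; linear_combination e₀₁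
    simpa [hr] using this
  have hsq : q * (‖M 1 1‖ ^ 2 : ℂ) = q * 1 := by
    rw [h₀₁, map_zero] at e₁₁
    rw [← Complex.conj_mul']
    linear_combination e₁₁
  exact (pow_eq_one_iff_of_nonneg (norm_nonneg _) two_ne_zero).mp
    (by exact_mod_cast mul_left_cancel₀ hq hsq)

theorem norm_apply_one_one_eq_one_of_preserves_antidiagonal' (hq : q ≠ 0) (hr : r ≠ 0)
    (hM : Mᴴ * !![0, 0, p; 0, q, 0; r, 0, 0] * M = !![0, 0, p; 0, q, 0; r, 0, 0])
    (h : M 2 2 = 0) : ‖M 1 1‖ = 1 := by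
  set e : Fin 3 ≃ Fin 3 := Fin.revPerm
  have hrev : !![0, 0, r; 0, q, 0; p, 0, 0] = (!![0, 0, p; 0, q, 0; r, 0, 0]).submatrix e e := by
    ext i j; fin_cases i <;> fin_cases j <;> rfl
  have hM' : (M.submatrix e e)ᴴ * !![0, 0, r; 0, q, 0; p, 0, 0] * M.submatrix e e
      = !![0, 0, r; 0, q, 0; p, 0, 0] := by
    rw [hrev, conjTranspose_submatrix, submatrix_mul_equiv, submatrix_mul_equiv, hM]
  have h₁₁ : (M.submatrix e e) 1 1 = M 1 1 := rfl
  have h₀₀ : (M.submatrix e e) 0 0 = M 2 2 := rfl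
  exact h₁₁ ▸ norm_apply_one_one_eq_one_of_preserves_antidiagonal hr hq hM' (h₀₀ ▸ h)

end Matrix

theorem Jmat_mul_Jmat : Jmat * Jmat = 1 := by
  rw [Jmat, diagonal_mul_diagonal, ← diagonal_one]
  congr 1
  ext i
  fin_cases i <;> simp

namespace IsSU21

variable {A : Matrix (Fin 3) (Fin 3) ℂ}

theorem inv_eq (hA : IsSU21 A) : A⁻¹ = Jmat * Aᴴ * Jmat := by
  refine inv_eq_left_inv ?_
  rw [show Jmat * Aᴴ * Jmat * A = Jmat * (Aᴴ * Jmat * A) by simp only [Matrix.mul_assoc], hA.2,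
    Jmat_mul_Jmat]

theorem trace_inv (hA : IsSU21 A) : A⁻¹.trace = conj A.trace := by
  rw [hA.inv_eq, trace_mul_cycle, Jmat_mul_Jmat, Matrix.one_mul, trace_conjTranspose]
  rfl

theorem det_smul_one_sub (hA : IsSU21 A) (z : ℂ) : (z • 1 - A).det = charCubic A.trace z := by
  have hadj : A.adjugate = A⁻¹ := by rw [inv_def, hA.1, Ring.inverse_one, one_smul]
  rw [det_smul_one_sub_fin_three, hadj, hA.trace_inv, hA.1, charCubic]

theorem exists_trace_zpow_mul_eq {B : Matrix (Fin 3) (Fin 3) ℂ} (hA : IsSU21 A)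
    (hB : IsSU21 B) (hf : 0 < fdisc A.trace) :
    ∃ a b c α β γ : ℂ, 1 < ‖a‖ ∧ ‖b‖ = 1 ∧ ‖c‖ = ‖a‖⁻¹ ∧
      (∀ n : ℤ, (A ^ n * B).trace = α * a ^ n + β * b ^ n + γ * c ^ n) ∧
      (α = 0 → ‖β‖ = 1) ∧ (γ = 0 → ‖β‖ = 1) := by
  obtain ⟨a, b, c, ha, hb, hc, ha₁, hb₁, hc₁⟩ := exists_charCubic_roots_of_fdisc_pos hf
  set d : Fin 3 → ℂ := ![a, b, c]
  have hc₀ : 0 < ‖c‖ := hc₁ ▸ inv_pos.mpr (one_pos.trans ha₁)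
  have hd₀ : ∀ i, d i ≠ 0 := fun i => by
    fin_cases i <;> simp [d, ← norm_pos_iff, hb₁, hc₀, one_pos.trans ha₁]
  have hd : Function.Injective d := by
    refine Function.Injective.of_comp (f := norm) (StrictAnti.injective ?_)
    refine Fin.strictAnti_iff_succ_lt.mpr fun i => ?_
    fin_cases i
    · simpa [d, hb₁] using ha₁
    · simpa [d, hb₁, hc₁] using inv_lt_one_of_one_lt₀ ha₁
  obtain ⟨Q, hQ, hAQ⟩ := exists_isUnit_mul_diagonal_of_injective A d hd fun i => by
    fin_cases i <;> simp [d, hA.det_smul_one_sub, ha, hb, hc]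
  have hQd : IsUnit Q.det := (isUnit_iff_isUnit_det Q).mp hQ
  set H := Qᴴ * Jmat * Q
  set B' := Q⁻¹ * B * Q
  have hdiag : Q⁻¹ * A * Q = diagonal d := by
    rw [Matrix.mul_assoc, hAQ, ← Matrix.mul_assoc, nonsing_inv_mul Q hQd, Matrix.one_mul]
  have hAH : (diagonal d)ᴴ * H * diagonal d = H := hdiag ▸ conjTranspose_mul_mul_of_conj hQ hA.2
  have hBH : B'ᴴ * H * B' = H := conjTranspose_mul_mul_of_conj hQ hB.2
  have hdetH : H.det ≠ 0 := by
    have hJ : Jmat.det = -1 := by simp [Jmat, det_diagonal, Fin.prod_univ_three]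
    simp [H, det_mul, det_conjTranspose, hJ, hQd.ne_zero]
  clear_value H
  obtain ⟨hH, hp, hq, hr⟩ := eq_antidiagonal_of_diagonal_preserves ha₁ hb₁ hc₁ hAH hdetH
  rw [hH] at hBH
  refine ⟨a, b, c, B' 0 0, B' 1 1, B' 2 2, ha₁, hb₁, hc₁, fun n => ?_,
    norm_apply_one_one_eq_one_of_preserves_antidiagonal hp hq hBH,
    norm_apply_one_one_eq_one_of_preserves_antidiagonal' hq hr hBH⟩
  rw [trace_zpow_mul_of_mul_eq_mul_diagonal hQ hd₀ hAQ, Fin.sum_univ_three]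
  simp only [d, B', cons_val_zero, cons_val_one, cons_val_two, head_cons, tail_cons]
  ring

end IsSU21

def HasExpGrowth (u : ℤ → ℂ) : Prop :=
  ∃ (k a : ℝ) (N : ℕ), 0 < k ∧ 1 < a ∧ ∀ n : ℤ, (N : ℤ) ≤ |n| → k * a ^ n.natAbs ≤ ‖u n‖

section Growth

variable {u : ℤ → ℂ}

theorem hasExpGrowth_of_eventually {k a : ℝ} (hk : 0 < k) (ha : 1 < a)
    (hpos : ∀ᶠ m : ℕ in atTop, k * a ^ m ≤ ‖u m‖)
    (hneg : ∀ᶠ m : ℕ in atTop, k * a ^ m ≤ ‖u (-m)‖) : HasExpGrowth u := by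
  obtain ⟨N, hN⟩ := eventually_atTop.mp (hpos.and hneg)
  refine ⟨k, a, N, hk, ha, fun n hn => ?_⟩
  have hN' : N ≤ n.natAbs := by rw [Int.abs_eq_natAbs] at hn; omega
  rcases Int.natAbs_eq n with h | h
  · conv_rhs => rw [h]
    exact (hN _ hN').1
  · conv_rhs => rw [h]
    exact (hN _ hN').2

theorem eventually_mul_norm_pow_le_norm {α β γ x y z : ℂ} {k : ℝ} (hk : k < ‖α‖)
    (hx : 1 < ‖x‖) (hy : ‖y‖ ≤ 1) (hz : ‖z‖ ≤ 1) :
    ∀ᶠ m : ℕ in atTop, k * ‖x‖ ^ m ≤ ‖α * x ^ m + β * y ^ m + γ * z ^ m‖ := by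
  have hbig : ∀ᶠ m : ℕ in atTop, ‖β‖ + ‖γ‖ ≤ (‖α‖ - k) * ‖x‖ ^ m :=
    ((tendsto_pow_atTop_atTop_of_one_lt hx).const_mul_atTop (sub_pos.mpr hk)).eventually_ge_atTop _
  filter_upwards [hbig] with m hm
  have hβ : ‖β * y ^ m‖ ≤ ‖β‖ := by
    rw [norm_mul, norm_pow]
    exact mul_le_of_le_one_right (norm_nonneg _) (pow_le_one₀ (norm_nonneg _) hy)
  have hγ : ‖γ * z ^ m‖ ≤ ‖γ‖ := by
    rw [norm_mul, norm_pow]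
    exact mul_le_of_le_one_right (norm_nonneg _) (pow_le_one₀ (norm_nonneg _) hz)
  have htri : ‖α * x ^ m‖ ≤ ‖α * x ^ m + β * y ^ m + γ * z ^ m‖ + ‖β * y ^ m‖ + ‖γ * z ^ m‖ := by
    have h₁ := norm_sub_le (α * x ^ m + β * y ^ m + γ * z ^ m - γ * z ^ m) (β * y ^ m)
    have h₂ := norm_sub_le (α * x ^ m + β * y ^ m + γ * z ^ m) (γ * z ^ m)
    simp only [add_sub_cancel_right] at h₁ h₂
    linarith
  rw [norm_mul, norm_pow] at htri
  linarith

theorem eventually_norm_lt_two {β γ y z : ℂ} (hβ : ‖β‖ = 1) (hy : ‖y‖ = 1) (hz : ‖z‖ < 1) :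
    ∀ᶠ m : ℕ in atTop, ‖β * y ^ m + γ * z ^ m‖ < 2 := by
  have hsmall : Tendsto (fun m : ℕ => γ * z ^ m) atTop (nhds 0) := by
    simpa using (tendsto_pow_atTop_nhds_zero_of_norm_lt_one hz).const_mul γ
  filter_upwards [(tendsto_zero_iff_norm_tendsto_zero.mp hsmall).eventually (gt_mem_nhds one_pos)]
    with m hm
  calc ‖β * y ^ m + γ * z ^ m‖ ≤ ‖β * y ^ m‖ + ‖γ * z ^ m‖ := norm_add_le _ _
    _ < 2 := by rw [norm_mul, norm_pow, hβ, hy, one_pow, one_mul]; linarith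

theorem Set.infinite_setOf_of_eventually {P : ℤ → Prop} {f : ℕ → ℤ} (hf : Function.Injective f)
    (h : ∀ᶠ m in atTop, P (f m)) : {n | P n}.Infinite :=
  frequently_cofinite_iff_infinite.mp
    (hf.tendsto_cofinite.frequently (Nat.cofinite_eq_atTop ▸ h.frequently))

theorem hasExpGrowth_or_infinite_setOf_norm_lt_two {a b c α β γ : ℂ} (ha : 1 < ‖a‖)
    (hb : ‖b‖ = 1) (hc : ‖c‖ = ‖a‖⁻¹) (hu : ∀ n, u n = α * a ^ n + β * b ^ n + γ * c ^ n)
    (hα : α = 0 → ‖β‖ = 1) (hγ : γ = 0 → ‖β‖ = 1) :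
    HasExpGrowth u ∨ {n | ‖u n‖ < 2}.Infinite := by
  have ha' : ‖a⁻¹‖ < 1 := by rw [norm_inv]; exact inv_lt_one_of_one_lt₀ ha
  have hb' : ‖b⁻¹‖ = 1 := by rw [norm_inv, hb, inv_one]
  have hc' : ‖c⁻¹‖ = ‖a‖ := by rw [norm_inv, hc, inv_inv]
  have hc₁ : ‖c‖ < 1 := hc ▸ inv_lt_one_of_one_lt₀ ha
  have hpos : ∀ m : ℕ, u m = α * a ^ m + β * b ^ m + γ * c ^ m := by simp [hu]
  have hneg : ∀ m : ℕ, u (-m) = γ * c⁻¹ ^ m + β * b⁻¹ ^ m + α * a⁻¹ ^ m := by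
    intro m; simp only [hu, _root_.zpow_neg, zpow_natCast, inv_pow]; ring
  by_cases hα₀ : α = 0
  · refine Or.inr (Set.infinite_setOf_of_eventually Nat.cast_injective ?_)
    filter_upwards [eventually_norm_lt_two (hα hα₀) hb hc₁] with m hm
    simpa [hpos, hα₀] using hm
  by_cases hγ₀ : γ = 0
  · refine Or.inr (Set.infinite_setOf_of_eventually (neg_injective.comp Nat.cast_injective) ?_)
    filter_upwards [eventually_norm_lt_two (hγ hγ₀) hb' ha'] with m hm
    simpa [hneg, hγ₀] using hm
  -- `α aⁿ` dominates as `n → ∞`, and `γ cⁿ` as `n → -∞`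
  have hk : 0 < min ‖α‖ ‖γ‖ / 2 := by positivity
  refine Or.inl (hasExpGrowth_of_eventually hk ha ?_ ?_)
  · simpa only [hpos] using eventually_mul_norm_pow_le_norm (β := β) (γ := γ)
      (by linarith [min_le_left ‖α‖ ‖γ‖, norm_pos_iff.mpr hα₀]) ha hb.le hc₁.le
  · simpa only [hneg, hc'] using eventually_mul_norm_pow_le_norm (β := β) (γ := α) (x := c⁻¹)
      (by linarith [min_le_right ‖α‖ ‖γ‖, norm_pos_iff.mpr hγ₀]) (hc' ▸ ha) hb'.le ha'.le

end Growth

theorem bounded_neighbors (c : ℂ) :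
    ∃ D : ℝ, 0 < D ∧
      ∀ A B : Matrix (Fin 3) (Fin 3) ℂ, IsSU21 A → IsSU21 B →
        (A * B * A⁻¹ * B⁻¹).trace = c → 0 < fdisc A.trace →
        (¬ ∃ (k a : ℝ) (N : ℕ), 0 < k ∧ 1 < a ∧
            ∀ n : ℤ, (N : ℤ) ≤ |n| →
              k * a ^ n.natAbs ≤ ‖(A ^ n * B).trace‖) →
        {n : ℤ | ‖(A ^ n * B).trace‖ < D}.Infinite := by
  refine ⟨2, two_pos, fun A B hA hB _ hf hgrowth => ?_⟩
  obtain ⟨x, y, z, α, β, γ, hx, hy, hz, hu, hα, hγ⟩ := hA.exists_trace_zpow_mul_eq hB hf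
  exact (hasExpGrowth_or_infinite_setOf_norm_lt_two hx hy hz hu hα hγ).resolve_left hgrowth
end

section
/- Let t ∈ ℂ with f(t) > 0. Then the cubic polynomial s³ − t·s² + conj(t)·s − 1 has three pairwise distinct complex roots λ₁, λ₂, λ₃ satisfying |λ₁| < 1, |λ₂| = 1 and |λ₃| > 1. -/
open Polynomial

/-- The characteristic cubic `s³ − t·s² + conj(t)·s − 1`. -/
noncomputable def cubic (t : ℂ) : Polynomial ℂ :=
  X ^ 3 - C t * X ^ 2 + C ((starRingEnd ℂ) t) * X - 1

/-!
The cubic is self-inversive: `s ↦ (conj s)⁻¹` maps its roots to roots, and their product is `1`.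
Its discriminant is `f(t) > 0`, so the roots are distinct, and they do not all lie on the unit
circle: for unimodular `a, b, c` with `a b c = 1` the discriminant is
`-(|a - b| |a - c| |b - c|)² ≤ 0`. A root `z` with `|z| < 1` (there is one, as `|(conj z)⁻¹| = |z|⁻¹`)
is thus paired with the root `(conj z)⁻¹` outside the circle, and since the product of the roots
is `1` the third root lies on the circle.
-/

open ComplexConjugate

theorem Complex.norm_inv_conj (z : ℂ) : ‖(conj z)⁻¹‖ = ‖z‖⁻¹ := by simp

theorem Complex.sq_sub_eq_neg_mul_mul_norm_sq {a b : ℂ} (ha : ‖a‖ = 1) (hb : ‖b‖ = 1) :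
    (a - b) ^ 2 = -(a * b * ‖a - b‖ ^ 2) := by
  have ha0 : a ≠ 0 := norm_ne_zero_iff.1 (by simp [ha])
  have hb0 : b ≠ 0 := norm_ne_zero_iff.1 (by simp [hb])
  rw [← Complex.mul_conj', map_sub, ← Complex.inv_eq_conj ha, ← Complex.inv_eq_conj hb]
  field_simp
  ring

theorem Complex.sq_discr_eq_neg_of_norm_eq_one {a b c : ℂ} (ha : ‖a‖ = 1) (hb : ‖b‖ = 1)
    (hc : ‖c‖ = 1) (habc : a * b * c = 1) :
    ((a - b) * (a - c) * (b - c)) ^ 2 = -(((‖a - b‖ * ‖a - c‖ * ‖b - c‖) ^ 2 : ℝ) : ℂ) := by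
  rw [mul_pow, mul_pow, Complex.sq_sub_eq_neg_mul_mul_norm_sq ha hb,
    Complex.sq_sub_eq_neg_mul_mul_norm_sq ha hc, Complex.sq_sub_eq_neg_mul_mul_norm_sq hb hc]
  push_cast
  linear_combination (-(‖a - b‖ * ‖a - c‖ * ‖b - c‖ : ℂ) ^ 2 * (a * b * c + 1)) * habc

theorem Multiset.exists_norm_lt_one_norm_eq_one_one_lt_norm {R : Multiset ℂ}
    (hcard : card R = 3) (hnodup : R.Nodup) (hprod : R.prod = 1)
    (hinv : ∀ z ∈ R, (conj z)⁻¹ ∈ R) (hoff : ∃ z ∈ R, ‖z‖ ≠ 1) :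
    ∃ l₁ l₂ l₃ : ℂ, l₁ ≠ l₂ ∧ l₁ ≠ l₃ ∧ l₂ ≠ l₃ ∧ l₁ ∈ R ∧ l₂ ∈ R ∧ l₃ ∈ R ∧
      ‖l₁‖ < 1 ∧ ‖l₂‖ = 1 ∧ 1 < ‖l₃‖ := by
  obtain ⟨l₁, hl₁, hlt⟩ : ∃ z ∈ R, ‖z‖ < 1 := by
    obtain ⟨z, hz, hz1⟩ := hoff
    rcases hz1.lt_or_gt with h | h
    · exact ⟨z, hz, h⟩
    · exact ⟨_, hinv z hz, by rw [Complex.norm_inv_conj]; exact inv_lt_one_of_one_lt₀ h⟩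
  have hpos : 0 < ‖l₁‖ := by
    refine norm_pos_iff.2 fun h => ?_
    rw [Multiset.prod_eq_zero (h ▸ hl₁)] at hprod
    exact zero_ne_one hprod
  set l₃ := (conj l₁)⁻¹
  have hgt : 1 < ‖l₃‖ := by rw [Complex.norm_inv_conj]; exact (one_lt_inv₀ hpos).2 hlt
  have h13 : l₁ ≠ l₃ := by rintro h; rw [h] at hlt; linarith
  obtain ⟨l₂, rfl⟩ : ∃ l₂, R = l₁ ::ₘ l₃ ::ₘ {l₂} := by
    have hl₃ : l₃ ∈ R.erase l₁ := (Multiset.mem_erase_of_ne h13.symm).2 (hinv l₁ hl₁)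
    have hcard' : card ((R.erase l₁).erase l₃) = 1 := by
      simp [Multiset.card_erase_of_mem hl₃, Multiset.card_erase_of_mem hl₁, hcard]
    obtain ⟨l₂, h⟩ := Multiset.card_eq_one.1 hcard'
    exact ⟨l₂, by rw [← h, Multiset.cons_erase hl₃, Multiset.cons_erase hl₁]⟩
  simp only [Multiset.nodup_cons, Multiset.mem_cons, Multiset.mem_singleton, not_or] at hnodup
  simp only [Multiset.prod_cons, Multiset.prod_singleton] at hprod
  have hl₂ : ‖l₂‖ = 1 := by
    have h := congrArg norm hprod
    rw [norm_mul, norm_mul, Complex.norm_inv_conj, ← mul_assoc, mul_inv_cancel₀ hpos.ne'] at h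
    simpa using h
  exact ⟨l₁, l₂, l₃, hnodup.1.2, h13, Ne.symm hnodup.2.1, by simp, by simp, by simp, hlt, hl₂, hgt⟩

def cubicCoeffs (t : ℂ) : Cubic ℂ := ⟨1, -t, conj t, -1⟩

section

variable (t : ℂ)

theorem toPoly_cubicCoeffs : (cubicCoeffs t).toPoly = cubic t := by
  simp only [Cubic.toPoly, cubicCoeffs, cubic, map_one, map_neg, one_mul, neg_mul]
  ring

theorem cubic_ne_zero : cubic t ≠ 0 :=
  toPoly_cubicCoeffs t ▸ Cubic.ne_zero_of_a_ne_zero one_ne_zero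

theorem roots_map_cubicCoeffs :
    (Cubic.map (RingHom.id ℂ) (cubicCoeffs t)).roots = (cubic t).roots := by
  rw [Cubic.map_roots, Polynomial.map_id, toPoly_cubicCoeffs]

theorem discr_cubicCoeffs : (cubicCoeffs t).discr = fdisc t := by
  have hnorm := Complex.mul_conj' t
  have hre : t ^ 3 + conj t ^ 3 = (2 * (t ^ 3).re : ℝ) := by
    rw [← map_pow]
    exact Complex.add_conj _
  simp only [Cubic.discr, cubicCoeffs, fdisc]
  push_cast at hre ⊢
  linear_combination (t * conj t + ‖t‖ ^ 2 + 18) * hnorm - 4 * hre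

theorem exists_roots_cubic_eq : ∃ a b c : ℂ, (cubic t).roots = {a, b, c} ∧ a * b * c = 1 ∧
    (fdisc t : ℂ) = ((a - b) * (a - c) * (b - c)) ^ 2 := by
  have ha : (cubicCoeffs t).a ≠ 0 := one_ne_zero
  obtain ⟨a, b, c, hroots⟩ := (Cubic.splits_iff_roots_eq_three (φ := RingHom.id ℂ) ha).1 (IsAlgClosed.splits _)
  have hdiscr := Cubic.discr_eq_prod_three_roots ha hroots
  have hprod := Cubic.d_eq_three_roots ha hroots
  rw [RingHom.id_apply, discr_cubicCoeffs] at hdiscr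
  simp only [RingHom.id_apply, cubicCoeffs, one_mul] at hdiscr hprod
  exact ⟨a, b, c, roots_map_cubicCoeffs t ▸ hroots, by linear_combination hprod, hdiscr⟩

theorem nodup_roots_cubic (hf : fdisc t ≠ 0) : (cubic t).roots.Nodup := by
  rw [← roots_map_cubicCoeffs,
    ← Cubic.discr_ne_zero_iff_roots_nodup (one_ne_zero : (cubicCoeffs t).a ≠ 0)
      (IsAlgClosed.splits _), discr_cubicCoeffs]
  exact_mod_cast hf

theorem exists_mem_roots_cubic_norm_ne_one (hf : 0 < fdisc t) :
    ∃ z ∈ (cubic t).roots, ‖z‖ ≠ 1 := by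
  obtain ⟨a, b, c, hroots, hprod, hdiscr⟩ := exists_roots_cubic_eq t
  by_contra! hon
  simp only [hroots, Multiset.insert_eq_cons, Multiset.mem_cons, Multiset.mem_singleton,
    forall_eq_or_imp, forall_eq] at hon
  rw [Complex.sq_discr_eq_neg_of_norm_eq_one hon.1 hon.2.1 hon.2.2 hprod] at hdiscr
  have hneg : fdisc t = -(‖a - b‖ * ‖a - c‖ * ‖b - c‖) ^ 2 := by exact_mod_cast hdiscr
  nlinarith

end

theorem inv_conj_mem_roots_cubic {t z : ℂ} (hz : z ∈ (cubic t).roots) :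
    (conj z)⁻¹ ∈ (cubic t).roots := by
  have hroot := isRoot_of_mem_roots hz
  have hz0 : conj z ≠ 0 := by
    rintro h
    simp [(map_eq_zero _).1 h, cubic] at hroot
  have hconj := congrArg conj hroot.eq_zero
  rw [mem_roots (cubic_ne_zero t)]
  simp only [cubic, IsRoot.def, eval_sub, eval_add, eval_mul, eval_pow, eval_X, eval_C, eval_one,
    map_sub, map_add, map_mul, map_pow, map_one, map_zero, Complex.conj_conj] at hconj ⊢
  field_simp
  linear_combination -hconj

theorem roots_of_fpos (t : ℂ) (hf : 0 < fdisc t) :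
    ∃ l₁ l₂ l₃ : ℂ, l₁ ≠ l₂ ∧ l₁ ≠ l₃ ∧ l₂ ≠ l₃ ∧
      (cubic t).IsRoot l₁ ∧ (cubic t).IsRoot l₂ ∧ (cubic t).IsRoot l₃ ∧
      ‖l₁‖ < 1 ∧ ‖l₂‖ = 1 ∧ 1 < ‖l₃‖ := by
  obtain ⟨a, b, c, hroots, hprod, -⟩ := exists_roots_cubic_eq t
  obtain ⟨l₁, l₂, l₃, h12, h13, h23, hl₁, hl₂, hl₃, hlt, heq, hgt⟩ :=
    Multiset.exists_norm_lt_one_norm_eq_one_one_lt_norm (by simp [hroots])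
      (nodup_roots_cubic t hf.ne') (by simp [hroots, mul_assoc, ← hprod])
      (fun _ => inv_conj_mem_roots_cubic) (exists_mem_roots_cubic_norm_ne_one t hf)
  exact ⟨l₁, l₂, l₃, h12, h13, h23, isRoot_of_mem_roots hl₁, isRoot_of_mem_roots hl₂,
    isRoot_of_mem_roots hl₃, hlt, heq, hgt⟩
end
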